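/- Let C₁,…,C_m be the clauses of a CNF formula over variables x₁,…,xₙ. Define the Kripke structure W=(S,R,π) over atomic propositions p₁,…,pₙ by: S={s_i | i≤m} ∪ {r_i^j, r̄_i^j | i≤m, j≤n}; R contains (s_i,r_i^1) always and (s_i,r̄_i^1) iff x₁ does not occur in C_i; for 1≤j≤n−1, R contains (r_i^j,r_i^{j+1}) always, (r_i^j,r̄_i^{j+1}) iff x_{j+1} does not occur in C_i, (r̄_i^j,r_i^{j+1}) iff x_j does not occur in C_i but x_{j+1} does, and (r̄_i^j,r̄_i^{j+1}) iff neither x_j nor x_{j+1} occurs in C_i; π(s_i)=π(r̄_i^j)=∅, and π(r_i^j)={p_j} if x_j occurs positively in C_i or does not occur in C_i, π(r_i^j)=∅ if x_j occurs negatively in C_i. Then the CNF formula C₁∧…∧C_m is satisfiable if and only if W,{s₁,…,s_m} ⊨ ⋁_{j=1}^{n} □^j dep(;p_j), where □^j denotes j nested □ operators and dep(;p_j) the 0-ary dependence atom. -/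

import Mathlib

/-! From the team `{s₁,…,s_m}`, `□^j` reaches exactly the level-`j` worlds of the clauses:
`r_i^j`, together with `r̄_i^j` when `x_j` does not occur in `C_i`. As `r̄_i^j` never satisfies
`p_j` while `r_i^j` does unless `x_j` occurs negatively, `□^j dep(;p_j)` holds on the subteam of
a set `I` of clauses iff `x_j` occurs in every clause of `I`, always with the same sign. A
splitting of `{s₁,…,s_m}` among the `n` disjuncts is therefore a cover of the clauses by sets
`I_j` on each of which `x_j` has a constant sign `b_j`, i.e. a satisfying assignment `j ↦ b_j`. -/

/-- Syntax of modal dependence logic (MDL) over atomic propositions `AP`. -/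
inductive MDL (AP : Type) : Type where
  | top   : MDL AP                       -- ⊤
  | bot   : MDL AP                       -- ⊥
  | atom  : AP → MDL AP                  -- p
  | natom : AP → MDL AP                  -- ¬p
  | dep   : List AP → AP → MDL AP        -- dep(p₁,…,pₙ;q)
  | ndep  : List AP → AP → MDL AP        -- ¬dep(p₁,…,pₙ;q)
  | and   : MDL AP → MDL AP → MDL AP     -- ∧
  | dor   : MDL AP → MDL AP → MDL AP     -- dependence disjunction ∨
  | cor   : MDL AP → MDL AP → MDL AP     -- classical disjunction ⊻
  | box   : MDL AP → MDL AP              -- □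
  | dia   : MDL AP → MDL AP              -- ◇

/-- Team semantics of MDL over a Kripke structure `(S, R, π)`. -/
def MDL.sat {S AP : Type} (R : S → S → Prop) (π : S → Set AP) :
    MDL AP → Set S → Prop
  | .top, _ => True
  | .bot, T => T = ∅
  | .atom p, T => ∀ s ∈ T, p ∈ π s
  | .natom p, T => ∀ s ∈ T, p ∉ π s
  | .dep ps q, T => ∀ s₁ ∈ T, ∀ s₂ ∈ T,
      (∀ p ∈ ps, (p ∈ π s₁ ↔ p ∈ π s₂)) → (q ∈ π s₁ ↔ q ∈ π s₂)
  | .ndep _ _, T => T = ∅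
  | .and φ ψ, T => MDL.sat R π φ T ∧ MDL.sat R π ψ T
  | .dor φ ψ, T => ∃ T₁ T₂ : Set S, T = T₁ ∪ T₂ ∧ MDL.sat R π φ T₁ ∧ MDL.sat R π ψ T₂
  | .cor φ ψ, T => MDL.sat R π φ T ∨ MDL.sat R π ψ T
  | .box φ, T => MDL.sat R π φ {s' | ∃ s ∈ T, R s s'}
  | .dia φ, T => ∃ T' : Set S, MDL.sat R π φ T' ∧ ∀ s ∈ T, ∃ s' ∈ T', R s s'

/-- Big dependence disjunction ⋁ of a list of formulas (empty disjunction is ⊥). -/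
def MDL.bigDor {AP : Type} : List (MDL AP) → MDL AP
  | [] => .bot
  | [φ] => φ
  | φ :: ψ :: rest => .dor φ (MDL.bigDor (ψ :: rest))

/-- Big conjunction ⋀ of a list of formulas (empty conjunction is ⊤). -/
def MDL.bigAnd {AP : Type} : List (MDL AP) → MDL AP
  | [] => .top
  | [φ] => φ
  | φ :: ψ :: rest => .and φ (MDL.bigAnd (ψ :: rest))

/-- `◇^k φ` : `k` nested ◇ operators. -/
def MDL.diaIter {AP : Type} : ℕ → MDL AP → MDL AP
  | 0, φ => φ
  | n + 1, φ => .dia (MDL.diaIter n φ)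

/-- `□^k φ` : `k` nested □ operators. -/
def MDL.boxIter {AP : Type} : ℕ → MDL AP → MDL AP
  | 0, φ => φ
  | n + 1, φ => .box (MDL.boxIter n φ)

/-- A CNF formula with `m` clauses over `n` variables: `C i j = some true` iff
variable `x_j` occurs positively in clause `C_i`, `some false` iff it occurs
negatively, `none` iff it does not occur (each variable occurs at most once
per clause). -/
def CNF.Satisfiable {m n : ℕ} (C : Fin m → Fin n → Option Bool) : Prop :=
  ∃ θ : Fin n → Bool, ∀ i : Fin m, ∃ j : Fin n, C i j = some (θ j)

namespace MDL

variable {S AP : Type} (R : S → S → Prop) (π : S → Set AP)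

def successors (T : Set S) : Set S := {s' | ∃ s ∈ T, R s s'}

theorem sat_boxIter (φ : MDL AP) (k : ℕ) (T : Set S) :
    sat R π (boxIter k φ) T ↔ sat R π φ ((successors R)^[k] T) := by
  induction k generalizing T with
  | zero => rfl
  | succ k ih => exact ih (successors R T)

theorem sat_dep_nil (q : AP) (T : Set S) :
    sat R π (dep [] q) T ↔ (∀ s ∈ T, q ∈ π s) ∨ (∀ s ∈ T, q ∉ π s) := by
  simp only [sat, List.not_mem_nil, IsEmpty.forall_iff, implies_true, forall_const]
  constructor
  · intro h
    by_contra! ⟨⟨s₁, hs₁, h₁⟩, ⟨s₂, hs₂, h₂⟩⟩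
    exact h₁ ((h s₁ hs₁ s₂ hs₂).2 h₂)
  · rintro (h | h) s₁ hs₁ s₂ hs₂
    · exact iff_of_true (h s₁ hs₁) (h s₂ hs₂)
    · exact iff_of_false (h s₁ hs₁) (h s₂ hs₂)

theorem sat_bigDor_cons (φ : MDL AP) (L : List (MDL AP)) (T : Set S) :
    sat R π (bigDor (φ :: L)) T ↔
      ∃ T₁ T₂ : Set S, T = T₁ ∪ T₂ ∧ sat R π φ T₁ ∧ sat R π (bigDor L) T₂ := by
  cases L with
  | nil =>
    refine ⟨fun h => ⟨T, ∅, (Set.union_empty T).symm, h, rfl⟩, ?_⟩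
    rintro ⟨T₁, _, rfl, h₁, rfl : _ = ∅⟩
    rwa [Set.union_empty]
  | cons ψ L => rfl

theorem sat_bigDor_map {ι : Type*} (g : ι → MDL AP) {l : List ι} (hl : l.Nodup) (T : Set S) :
    sat R π (bigDor (l.map g)) T ↔
      ∃ f : ι → Set S, T = (⋃ i ∈ l, f i) ∧ ∀ i ∈ l, sat R π (g i) (f i) := by
  classical
  induction l generalizing T with
  | nil =>
    refine ⟨fun (h : T = ∅) => ⟨fun _ => ∅, by simp [h], by simp⟩, ?_⟩
    rintro ⟨f, rfl, -⟩
    simp [bigDor, sat]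
  | cons a l ih =>
    obtain ⟨ha, hl⟩ := List.nodup_cons.mp hl
    simp only [List.map_cons, sat_bigDor_cons, ih hl, List.mem_cons, forall_eq_or_imp,
      Set.iUnion_iUnion_eq_or_left]
    constructor
    · rintro ⟨T₁, _, rfl, h₁, f, rfl, hf⟩
      refine ⟨Function.update f a T₁, ?_, by simpa, fun i hi => ?_⟩
      · rw [Function.update_self]
        congr 1
        refine Set.iUnion₂_congr fun i hi => ?_
        rw [Function.update_of_ne (ne_of_mem_of_not_mem hi ha)]
      · rw [Function.update_of_ne (ne_of_mem_of_not_mem hi ha)]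
        exact hf i hi
    · rintro ⟨f, rfl, h₁, hf⟩
      exact ⟨f a, _, rfl, h₁, f, rfl, hf⟩

end MDL

namespace CNF

variable {m n : ℕ}

theorem satisfiable_iff_exists_iUnion_eq_univ (C : Fin m → Fin n → Option Bool) :
    Satisfiable C ↔ ∃ I : Fin n → Set (Fin m),
      (⋃ j, I j) = Set.univ ∧ ∀ j, ∃ b, ∀ i ∈ I j, C i j = some b := by
  constructor
  · rintro ⟨θ, hθ⟩
    exact ⟨fun j => {i | C i j = some (θ j)}, Set.iUnion_eq_univ_iff.2 hθ,
      fun j => ⟨θ j, fun i hi => hi⟩⟩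
  · rintro ⟨I, hI, hb⟩
    choose θ hθ using hb
    refine ⟨θ, fun i => ?_⟩
    obtain ⟨j, hj⟩ := Set.iUnion_eq_univ_iff.1 hI i
    exact ⟨j, hθ j i hj⟩

/-- Worlds: `Sum.inl i` is `s_i`, and `Sum.inr (i, j, true)`, `Sum.inr (i, j, false)` are
`r_i^{j+1}`, `r̄_i^{j+1}` (levels are 0-based); the proposition `j : Fin n` is `p_{j+1}`. -/
abbrev World (m n : ℕ) : Type := Fin m ⊕ (Fin m × Fin n × Bool)

variable (C : Fin m → Fin n → Option Bool)

def kripkeRel : World m n → World m n → Prop := fun s s' =>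
  match s, s' with
  | Sum.inl i, Sum.inr (i', j, b) =>
      i = i' ∧ (j : ℕ) = 0 ∧ (b = true ∨ (b = false ∧ C i j = none))
  | Sum.inr (i, j, b), Sum.inr (i', j', b') =>
      i = i' ∧ (j' : ℕ) = (j : ℕ) + 1 ∧
      ((b = true ∧ b' = true) ∨
       (b = true ∧ b' = false ∧ C i j' = none) ∨
       (b = false ∧ b' = true ∧ C i j = none ∧ C i j' ≠ none) ∨
       (b = false ∧ b' = false ∧ C i j = none ∧ C i j' = none))
  | Sum.inl _, Sum.inl _ => False
  | Sum.inr _, Sum.inl _ => False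

def kripkeVal : World m n → Set (Fin n) := fun s => {p : Fin n |
  match s with
  | Sum.inr (i, j, true) => p = j ∧ C i j ≠ some false
  | Sum.inl _ => False
  | Sum.inr (_, _, false) => False}

def level (I : Set (Fin m)) (j : Fin n) : Set (World m n) :=
  {s | ∃ i ∈ I, s = .inr (i, j, true) ∨ (s = .inr (i, j, false) ∧ C i j = none)}

variable {C}

theorem successors_image_inl {I : Set (Fin m)} {j : Fin n} (hj : (j : ℕ) = 0) :
    MDL.successors (kripkeRel C) (Sum.inl '' I) = level C I j := by
  have hj' (j' : Fin n) : (j' : ℕ) = 0 ↔ j' = j := by rw [Fin.ext_iff, hj]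
  ext (_ | ⟨i, j', _ | _⟩) <;> simp +contextual [MDL.successors, kripkeRel, level, hj']

theorem successors_level {I : Set (Fin m)} {j j' : Fin n} (hj : (j' : ℕ) = j + 1) :
    MDL.successors (kripkeRel C) (level C I j) = level C I j' := by
  have hj' (j'' : Fin n) : (j'' : ℕ) = j + 1 ↔ j'' = j' := by rw [Fin.ext_iff, hj]
  ext (_ | ⟨i, j'', _ | _⟩) <;>
    simp +contextual [MDL.successors, kripkeRel, level, hj', exists_or, and_assoc]
  grind

theorem iterate_successors_image_inl (I : Set (Fin m)) (j : Fin n) :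
    (MDL.successors (kripkeRel C))^[j + 1] (Sum.inl '' I) = level C I j := by
  obtain ⟨k, hk⟩ := j
  induction k with
  | zero => exact successors_image_inl rfl
  | succ k ih =>
    rw [Function.iterate_succ_apply', ih (by omega)]
    exact successors_level rfl

theorem sat_dep_level (I : Set (Fin m)) (j : Fin n) :
    MDL.sat (kripkeRel C) (kripkeVal C) (.dep [] j) (level C I j) ↔
      ∃ b, ∀ i ∈ I, C i j = some b := by
  have h_true : (∀ s ∈ level C I j, j ∈ kripkeVal C s) ↔ ∀ i ∈ I, C i j = some true := by
    constructor
    · intro h i hi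
      rcases hC : C i j with _ | _ | _
      · exact (h _ ⟨i, hi, .inr ⟨rfl, hC⟩⟩).elim
      · exact ((h _ ⟨i, hi, .inl rfl⟩).2 hC).elim
      · rfl
    · rintro h _ ⟨i, hi, rfl | ⟨rfl, hnone⟩⟩
      · exact ⟨rfl, by simp [h i hi]⟩
      · simp [h i hi] at hnone
  have h_false : (∀ s ∈ level C I j, j ∉ kripkeVal C s) ↔ ∀ i ∈ I, C i j = some false := by
    constructor
    · exact fun h i hi => by_contra fun hne => h _ ⟨i, hi, .inl rfl⟩ ⟨rfl, hne⟩
    · rintro h _ ⟨i, hi, rfl | ⟨rfl, -⟩⟩ hval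
      · exact hval.2 (h i hi)
      · exact hval
  rw [MDL.sat_dep_nil, h_true, h_false, Bool.exists_bool, or_comm]

theorem sat_boxIter_dep_image_inl (I : Set (Fin m)) (j : Fin n) :
    MDL.sat (kripkeRel C) (kripkeVal C) (.boxIter (j + 1) (.dep [] j)) (Sum.inl '' I) ↔
      ∃ b, ∀ i ∈ I, C i j = some b := by
  rw [MDL.sat_boxIter, iterate_successors_image_inl, sat_dep_level]

theorem satisfiable_iff_sat_kripke :
    Satisfiable C ↔ MDL.sat (kripkeRel C) (kripkeVal C)
      (.bigDor ((List.finRange n).map fun j : Fin n => .boxIter (j + 1) (.dep [] j)))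
      (Set.range Sum.inl) := by
  rw [MDL.sat_bigDor_map _ _ _ (List.nodup_finRange n), satisfiable_iff_exists_iUnion_eq_univ]
  simp only [List.mem_finRange, Set.iUnion_true, forall_const]
  constructor
  · rintro ⟨I, hI, hI_const⟩
    refine ⟨fun j => Sum.inl '' I j, ?_, fun j => (sat_boxIter_dep_image_inl _ _).2 (hI_const j)⟩
    rw [← Set.image_iUnion, hI, Set.image_univ]
  · rintro ⟨f, hf, hf_sat⟩
    have hf_inl (j : Fin n) : Sum.inl '' (Sum.inl ⁻¹' f j) = f j :=
      Set.image_preimage_eq_of_subset (hf ▸ Set.subset_iUnion f j)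
    refine ⟨fun j => Sum.inl ⁻¹' f j, ?_, fun j => ?_⟩
    · rw [← Set.preimage_iUnion, ← hf, Set.preimage_range]
    · rw [← sat_boxIter_dep_image_inl, hf_inl]
      exact hf_sat j

end CNF

/-- Reduction of CNF satisfiability to MDL model checking for
the fragment {□, ∨, dep}.  Worlds: `Sum.inl i = s_i` and
`Sum.inr (i, j, true) = r_i^{j+1}`, `Sum.inr (i, j, false) = r̄_i^{j+1}`
(`j : Fin n` is the 0-based level, so level `j` here is level `j+1` of the
informal statement); atomic propositions: `j = p_{j+1}`.
`R` contains `(s_i, r_i^1)` always and `(s_i, r̄_i^1)` iff `x₁` does not occur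
in `C_i`; it contains `(r_i^j, r_i^{j+1})` always, `(r_i^j, r̄_i^{j+1})` iff
`x_{j+1}` does not occur in `C_i`, `(r̄_i^j, r_i^{j+1})` iff `x_j` does not
occur in `C_i` but `x_{j+1}` does, and `(r̄_i^j, r̄_i^{j+1})` iff neither
occurs.  `π(s_i) = π(r̄_i^j) = ∅`; `π(r_i^j) = {p_j}` iff `x_j` occurs
positively in `C_i` or does not occur at all, and `= ∅` iff `x_j` occurs
negatively.  Then `C₁ ∧ … ∧ C_m` is satisfiable iff
`W, {s₁,…,s_m} ⊨ ⋁_{j=1}^n □^j dep(;p_j)`. -/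
theorem stmt2 (m n : ℕ) (C : Fin m → Fin n → Option Bool) :
    CNF.Satisfiable C ↔
      MDL.sat (S := Fin m ⊕ (Fin m × Fin n × Bool))
        (fun s s' =>
          match s, s' with
          | Sum.inl i, Sum.inr (i', j, b) =>
              i = i' ∧ (j : ℕ) = 0 ∧ (b = true ∨ (b = false ∧ C i j = none))
          | Sum.inr (i, j, b), Sum.inr (i', j', b') =>
              i = i' ∧ (j' : ℕ) = (j : ℕ) + 1 ∧
              ((b = true ∧ b' = true) ∨
               (b = true ∧ b' = false ∧ C i j' = none) ∨
               (b = false ∧ b' = true ∧ C i j = none ∧ C i j' ≠ none) ∨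
               (b = false ∧ b' = false ∧ C i j = none ∧ C i j' = none))
          | _, _ => False)
        (fun s => {p : Fin n |
          match s with
          | Sum.inr (i, j, true) => p = j ∧ C i j ≠ some false
          | _ => False})
        (MDL.bigDor ((List.finRange n).map fun j : Fin n =>
          MDL.boxIter ((j : ℕ) + 1) (MDL.dep [] j)))
        (Set.range Sum.inl) := by
  convert CNF.satisfiable_iff_sat_kripke using 2
  · funext s s'
    rcases s with _ | ⟨_, _, _ | _⟩ <;> rcases s' with _ | ⟨_, _, _ | _⟩ <;> rfl
  · funext s
    rcases s with _ | ⟨_, _, _ | _⟩ <;> rfl
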